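/- Let S be the zero-union of finite semigroups S₁, …, Sₙ with at least two of them non-commutative. Then the chromatic number of the commuting graph of S equals the sum of the chromatic numbers of the commuting graphs of the non-commutative Sᵢ. -/

import Mathlib

open SimpleGraph

/-- The center of a magma/semigroup: elements commuting with everything. -/
def sgCenter (S : Type*) [Mul S] : Set S := {x | ∀ y, x * y = y * x}

/-- The commuting graph of a semigroup: vertices are non-central elements,
distinct vertices adjacent iff they commute. -/
def commGraph (S : Type*) [Mul S] : SimpleGraph {x : S // x ∉ sgCenter S} where
  Adj x y := x ≠ y ∧ (x : S) * y = (y : S) * x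
  symm := ⟨fun x y ⟨h, h'⟩ => ⟨h.symm, h'.symm⟩⟩
  loopless := ⟨fun x ⟨h, _⟩ => h rfl⟩

/-- The extended commuting graph of a semigroup: vertices are all elements,
distinct vertices adjacent iff they commute. -/
def extCommGraph (S : Type*) [Mul S] : SimpleGraph S where
  Adj x y := x ≠ y ∧ x * y = y * x
  symm := ⟨fun x y ⟨h, h'⟩ => ⟨h.symm, h'.symm⟩⟩
  loopless := ⟨fun x ⟨h, _⟩ => h rfl⟩

/-- The graph join of two graphs on disjoint vertex sets. -/
def graphJoin {V W : Type*} (G : SimpleGraph V) (H : SimpleGraph W) :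
    SimpleGraph (V ⊕ W) where
  Adj x y := match x, y with
    | .inl a, .inl b => G.Adj a b
    | .inr a, .inr b => H.Adj a b
    | .inl _, .inr _ => True
    | .inr _, .inl _ => True
  symm := ⟨by rintro (a|a) (b|b) h <;> simp_all [SimpleGraph.Adj.symm]⟩
  loopless := ⟨by rintro (a|a) h; exacts [G.loopless.irrefl a h, H.loopless.irrefl a h]⟩

/-- The graph join of a family of graphs on disjoint vertex sets. -/
def graphJoinFam {ι : Type*} {V : ι → Type*} (G : ∀ i, SimpleGraph (V i)) :
    SimpleGraph (Σ i, V i) where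
  Adj x y := x.1 ≠ y.1 ∨ ∃ a b : V x.1, (G x.1).Adj a b ∧ x = ⟨x.1, a⟩ ∧ y = ⟨x.1, b⟩
  symm := ⟨by
    rintro ⟨i, a⟩ ⟨j, b⟩ (h | ⟨a', b', hadj, h1, h2⟩)
    · exact Or.inl h.symm
    · cases h1; cases h2
      exact Or.inr ⟨b', a, hadj.symm, rfl, rfl⟩⟩
  loopless := ⟨by
    rintro ⟨i, a⟩ (h | ⟨a', b', hadj, h1, h2⟩)
    · exact h rfl
    · cases h1
      cases h2
      exact (G i).loopless.irrefl _ hadj⟩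

/-- The strong product of two simple graphs. -/
def strongProd {V W : Type*} (G : SimpleGraph V) (H : SimpleGraph W) :
    SimpleGraph (V × W) where
  Adj x y := x ≠ y ∧ (x.1 = y.1 ∨ G.Adj x.1 y.1) ∧ (x.2 = y.2 ∨ H.Adj x.2 y.2)
  symm := ⟨fun x y ⟨h, h1, h2⟩ =>
    ⟨h.symm, h1.imp Eq.symm (fun h => G.symm.symm _ _ h), h2.imp Eq.symm (fun h => H.symm.symm _ _ h)⟩⟩
  loopless := ⟨fun x ⟨h, _⟩ => h rfl⟩

/-- The strong product of a family of simple graphs. -/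
def strongProdFam {ι : Type*} {V : ι → Type*} (G : ∀ i, SimpleGraph (V i)) :
    SimpleGraph (∀ i, V i) where
  Adj x y := x ≠ y ∧ ∀ i, x i = y i ∨ (G i).Adj (x i) (y i)
  symm := ⟨fun x y ⟨h, h'⟩ => ⟨h.symm, fun i => (h' i).imp Eq.symm (fun h => (G i).symm.symm _ _ h)⟩⟩
  loopless := ⟨fun x ⟨h, _⟩ => h rfl⟩

/-- `p` is a left path in the commuting graph of `S`. -/
def IsLeftPath {S : Type*} [Mul S] {u v : {x : S // x ∉ sgCenter S}}
    (p : (commGraph S).Walk u v) : Prop :=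
  p.IsPath ∧ u ≠ v ∧ ∀ w ∈ p.support, (u : S) * (w : S) = (v : S) * (w : S)

/-- The commuting graph of `S` contains a left path. -/
def HasLeftPath (S : Type*) [Mul S] : Prop :=
  ∃ (u v : {x : S // x ∉ sgCenter S}) (p : (commGraph S).Walk u v), IsLeftPath p

/-- The knit degree of `S`: the length of a shortest left path in its commuting graph. -/
noncomputable def knitDegree (S : Type*) [Mul S] : ℕ :=
  sInf {m | ∃ (u v : {x : S // x ∉ sgCenter S}) (p : (commGraph S).Walk u v),
    IsLeftPath p ∧ p.length = m}

/-- `p` is a *-left path in the extended commuting graph of `S`. -/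
def IsStarLeftPath {S : Type*} [Mul S] {u v : S}
    (p : (extCommGraph S).Walk u v) : Prop :=
  p.IsPath ∧ u ≠ v ∧ ∀ w ∈ p.support, u * w = v * w

/-- The extended commuting graph of `S` contains a *-left path. -/
def HasStarLeftPath (S : Type*) [Mul S] : Prop :=
  ∃ (u v : S) (p : (extCommGraph S).Walk u v), IsStarLeftPath p

/-- The *-knit degree of `S`. -/
noncomputable def starKnitDegree (S : Type*) [Mul S] : ℕ :=
  sInf {m | ∃ (u v : S) (p : (extCommGraph S).Walk u v), IsStarLeftPath p ∧ p.length = m}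

/-- The zero-union of a family of semigroups: their disjoint union plus a new zero. -/
def ZeroUnion {n : ℕ} (S : Fin n → Type*) : Type _ := Option (Σ i, S i)

instance {n : ℕ} (S : Fin n → Type*) [∀ i, Mul (S i)] : Mul (ZeroUnion S) where
  mul x y := match x, y with
    | some ⟨i, a⟩, some ⟨j, b⟩ =>
      if h : j = i then some ⟨i, a * (h ▸ b)⟩ else none
    | _, _ => none

/-! The zero of the zero-union is central, a nonzero element is central iff it is central in its
component, and elements of different components commute because their product is `0`. Hence the
commuting graph of the zero-union is the join of the commuting graphs of the components, where the
commutative components contribute empty graphs. In a proper colouring of a join the blocks use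
pairwise disjoint sets of colours, so the chromatic number of a join is the sum of the chromatic
numbers of its blocks. -/

section GraphJoin

variable {ι : Type*} {V : ι → Type*} {G : ∀ i, SimpleGraph (V i)}

lemma graphJoinFam_adj_of_ne {i j : ι} (hij : i ≠ j) (a : V i) (b : V j) :
    (graphJoinFam G).Adj ⟨i, a⟩ ⟨j, b⟩ :=
  Or.inl hij

lemma graphJoinFam_adj_mk {i : ι} {a b : V i} :
    (graphJoinFam G).Adj ⟨i, a⟩ ⟨i, b⟩ ↔ (G i).Adj a b := by
  refine ⟨?_, fun h => Or.inr ⟨a, b, h, rfl, rfl⟩⟩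
  rintro (hii | ⟨a', b', hadj, ha, hb⟩)
  · exact absurd rfl hii
  · rwa [sigma_mk_injective ha, sigma_mk_injective hb]

lemma colorable_graphJoinFam [Fintype ι] {c : ι → ℕ} (h : ∀ i, (G i).Colorable (c i)) :
    (graphJoinFam G).Colorable (∑ i, c i) := by
  have C := fun i => (h i).some
  let D : (graphJoinFam G).Coloring (Σ i, Fin (c i)) :=
    Coloring.mk (fun x => ⟨x.1, C x.1 x.2⟩) <| by
      rintro ⟨i, a⟩ ⟨j, b⟩ hadj hcol
      obtain rfl : i = j := congrArg Sigma.fst hcol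
      exact (C i).valid (graphJoinFam_adj_mk.1 hadj) (eq_of_heq (Sigma.mk.inj hcol).2)
  simpa using D.colorable

lemma sum_chromaticNumber_le_of_colorable_graphJoinFam [Fintype ι] {m : ℕ}
    (hm : (graphJoinFam G).Colorable m) : ∑ i, (G i).chromaticNumber ≤ m := by
  classical
  obtain ⟨C⟩ := hm
  let A : ι → Finset (Fin m) := fun i => {k | ∃ a, C ⟨i, a⟩ = k}
  have hA : ∀ i, (G i).Colorable (A i).card := fun i => by
    let D : (G i).Coloring (A i) :=
      Coloring.mk (fun a => ⟨C ⟨i, a⟩, by simp [A]⟩) fun hadj hcol =>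
        C.valid (graphJoinFam_adj_mk.2 hadj) (congrArg Subtype.val hcol)
    simpa using D.colorable
  have hdisj : ((Finset.univ : Finset ι) : Set ι).PairwiseDisjoint A := by
    intro i _ j _ hij
    refine Finset.disjoint_left.2 fun k hki hkj => ?_
    obtain ⟨a, rfl⟩ := (Finset.mem_filter.1 hki).2
    obtain ⟨b, hb⟩ := (Finset.mem_filter.1 hkj).2
    exact C.valid (graphJoinFam_adj_of_ne hij a b) hb.symm
  calc ∑ i, (G i).chromaticNumber ≤ ∑ i, (((A i).card : ℕ) : ℕ∞) :=
        Finset.sum_le_sum fun i _ => (hA i).chromaticNumber_le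
    _ = (Finset.univ.biUnion A).card := by rw [Finset.card_biUnion hdisj, Nat.cast_sum]
    _ ≤ m := by exact_mod_cast (Finset.card_le_univ _).trans_eq (Fintype.card_fin m)

theorem chromaticNumber_graphJoinFam [Fintype ι] :
    (graphJoinFam G).chromaticNumber = ∑ i, (G i).chromaticNumber := by
  apply le_antisymm
  · by_cases hfin : ∀ i, (G i).chromaticNumber ≠ ⊤
    · have := (colorable_graphJoinFam fun i =>
        colorable_of_chromaticNumber_ne_top (hfin i)).chromaticNumber_le
      simpa [ENat.natCast_toNat (hfin _)] using this
    · push Not at hfin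
      obtain ⟨i, hi⟩ := hfin
      rw [ENat.sum_eq_top.2 ⟨i, Finset.mem_univ i, hi⟩]
      exact le_top
  · rw [chromaticNumber_eq_biInf]
    exact le_iInf₂ fun _ => sum_chromaticNumber_le_of_colorable_graphJoinFam

end GraphJoin

lemma chromaticNumber_commGraph_eq_zero {M : Type*} [Mul M] (h : ∀ x y : M, x * y = y * x) :
    (commGraph M).chromaticNumber = 0 :=
  chromaticNumber_eq_zero_iff.2 ⟨fun x => x.2 (h x.1)⟩

namespace ZeroUnion

variable {n : ℕ} {S : Fin n → Type*}

abbrev of (i : Fin n) (a : S i) : ZeroUnion S := some ⟨i, a⟩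

lemma of_inj {i : Fin n} {a b : S i} : of i a = of i b ↔ a = b :=
  ⟨fun h => eq_of_heq (Sigma.mk.inj (Option.some.inj h)).2, congrArg _⟩

lemma of_ne_of {i j : Fin n} (hij : i ≠ j) (a : S i) (b : S j) : of i a ≠ of j b :=
  fun h => hij (Sigma.mk.inj (Option.some.inj h)).1

variable [∀ i, Mul (S i)]

lemma of_mul_of_self (i : Fin n) (a b : S i) : of i a * of i b = of i (a * b) :=
  dif_pos rfl

lemma of_mul_of_of_ne {i j : Fin n} (hij : i ≠ j) (a : S i) (b : S j) :
    of i a * of j b = none :=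
  dif_neg hij.symm

lemma none_mem_sgCenter : (none : ZeroUnion S) ∈ sgCenter (ZeroUnion S) := by
  rintro (_ | _) <;> rfl

lemma of_mem_sgCenter_iff {i : Fin n} {a : S i} :
    of i a ∈ sgCenter (ZeroUnion S) ↔ a ∈ sgCenter (S i) := by
  refine ⟨fun h b => ?_, fun h => ?_⟩
  · simpa [of_mul_of_self, of_inj] using h (of i b)
  · rintro (_ | ⟨j, b⟩)
    · rfl
    · obtain rfl | hij := eq_or_ne i j
      · rw [of_mul_of_self, of_mul_of_self, h b]
      · rw [of_mul_of_of_ne hij, of_mul_of_of_ne hij.symm]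

def commGraphIso : graphJoinFam (fun i => commGraph (S i)) ≃g commGraph (ZeroUnion S) where
  toFun x := ⟨of x.1 x.2.1, mt of_mem_sgCenter_iff.1 x.2.2⟩
  invFun
    | ⟨some ⟨i, a⟩, h⟩ => ⟨i, a, mt of_mem_sgCenter_iff.2 h⟩
    | ⟨none, h⟩ => (h none_mem_sgCenter).elim
  left_inv _ := rfl
  right_inv
    | ⟨some _, _⟩ => rfl
    | ⟨none, h⟩ => (h none_mem_sgCenter).elim
  map_rel_iff' {x y} := by
    obtain ⟨i, a⟩ := x
    obtain ⟨j, b⟩ := y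
    obtain rfl | hij := eq_or_ne i j
    · simp [graphJoinFam_adj_mk, commGraph, of_mul_of_self, of_inj, Subtype.ext_iff]
    · refine iff_of_true ⟨fun h => of_ne_of hij _ _ (congrArg Subtype.val h), ?_⟩
        (graphJoinFam_adj_of_ne (G := fun i => commGraph (S i)) hij a b)
      exact (of_mul_of_of_ne hij _ _).trans (of_mul_of_of_ne hij.symm _ _).symm

end ZeroUnion

theorem chromaticNumber_commGraph_zeroUnion_general {n : ℕ} (S : Fin n → Type*)
    [∀ i, Semigroup (S i)]
    (NC : Finset (Fin n)) (hNC : ∀ i, i ∈ NC ↔ ¬ ∀ x y : S i, x * y = y * x) :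
    (commGraph (ZeroUnion S)).chromaticNumber =
      ∑ i ∈ NC, (commGraph (S i)).chromaticNumber := by
  rw [← chromaticNumber_congr ZeroUnion.commGraphIso, chromaticNumber_graphJoinFam]
  refine (Finset.sum_subset (Finset.subset_univ NC) fun i _ hi => ?_).symm
  exact chromaticNumber_commGraph_eq_zero (not_not.1 (mt (hNC i).2 hi))

theorem chromaticNumber_commGraph_zeroUnion {n : ℕ} (S : Fin n → Type*)
    [∀ i, Semigroup (S i)] [∀ i, Fintype (S i)] [∀ i, Nonempty (S i)]
    (NC : Finset (Fin n)) (hNC : ∀ i, i ∈ NC ↔ ¬ ∀ x y : S i, x * y = y * x)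
    (h2 : 2 ≤ NC.card) :
    (commGraph (ZeroUnion S)).chromaticNumber =
      ∑ i ∈ NC, (commGraph (S i)).chromaticNumber :=
  chromaticNumber_commGraph_zeroUnion_general S NC hNC
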